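/- Let ε > 0 and ω ∈ ℝ. Define E_{iω}(n) := ((1 + iεω/2)/(1 - iεω/2))^n and E_{-iω}(n) := ((1 - iεω/2)/(1 + iεω/2))^n for n ∈ ℤ (these are defined since 1 ± iεω/2 ≠ 0), and set Cos_ω(n) := (E_{iω}(n) + E_{-iω}(n))/2 and Sin_ω(n) := (E_{iω}(n) - E_{-iω}(n))/(2i). Then for all n ∈ ℤ: Cos_ω(n) and Sin_ω(n) are real numbers; Cos_ω(n)² + Sin_ω(n)² = 1; (Cos_ω(n+1) - Cos_ω(n))/ε = -ω·(Sin_ω(n) + Sin_ω(n+1))/2; and (Sin_ω(n+1) - Sin_ω(n))/ε = ω·(Cos_ω(n) + Cos_ω(n+1))/2. -/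

import Mathlib

/-- E_{iω} on the time scale εℤ. -/
noncomputable def cayleyExpI (ε ω : ℝ) (n : ℤ) : ℂ :=
  ((1 + Complex.I * (ε : ℂ) * (ω : ℂ) / 2) / (1 - Complex.I * (ε : ℂ) * (ω : ℂ) / 2)) ^ n

/-- E_{-iω} on the time scale εℤ. -/
noncomputable def cayleyExpNegI (ε ω : ℝ) (n : ℤ) : ℂ :=
  ((1 - Complex.I * (ε : ℂ) * (ω : ℂ) / 2) / (1 + Complex.I * (ε : ℂ) * (ω : ℂ) / 2)) ^ n

/-- The Cayley-cosine on εℤ. -/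
noncomputable def cayleyCos (ε ω : ℝ) (n : ℤ) : ℂ :=
  (cayleyExpI ε ω n + cayleyExpNegI ε ω n) / 2

/-- The Cayley-sine on εℤ. -/
noncomputable def cayleySin (ε ω : ℝ) (n : ℤ) : ℂ :=
  (cayleyExpI ε ω n - cayleyExpNegI ε ω n) / (2 * Complex.I)

/-!
With `c = iεω/2`, the Cayley factor `z = (1 + c)/(1 - c) = (1 + c)/conj(1 + c)` has modulus one
and `E_{-iω}(n) = conj E_{iω}(n)`. Hence `Cos_ω` and `Sin_ω` are the real and imaginary parts of
`E_{iω}(n)`, and `Cos_ω² + Sin_ω² = |E_{iω}(n)|² = 1`. The factor satisfies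
`z - 1 = c (z + 1)`, so `E_{iω}(n+1) - E_{iω}(n) = c (E_{iω}(n) + E_{iω}(n+1))`, whose real
and imaginary parts are the two difference relations.
-/

open Complex ComplexConjugate

theorem one_add_div_one_sub_zpow_succ_sub {K : Type*} [Field K] {c : K} (h₁ : 1 + c ≠ 0)
    (h₂ : 1 - c ≠ 0) (n : ℤ) :
    ((1 + c) / (1 - c)) ^ (n + 1) - ((1 + c) / (1 - c)) ^ n
      = c * (((1 + c) / (1 - c)) ^ n + ((1 + c) / (1 - c)) ^ (n + 1)) := by
  rw [zpow_add_one₀ (div_ne_zero h₁ h₂)]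
  field_simp
  ring

theorem norm_div_conj {a : ℂ} (ha : a ≠ 0) : ‖a / conj a‖ = 1 := by
  rw [norm_div, Complex.norm_conj, div_self (norm_ne_zero_iff.mpr ha)]

section
variable (ε ω : ℝ) (n : ℤ)

theorem conj_one_add_I_mul : conj (1 + I * ε * ω / 2) = 1 - I * ε * ω / 2 := by
  simp only [map_add, map_one, map_div₀, map_mul, conj_I, conj_ofReal, neg_mul, map_ofNat]
  ring

theorem one_add_I_mul_ne_zero : (1 + I * ε * ω / 2 : ℂ) ≠ 0 := fun h => by
  simpa using congrArg re h

theorem conj_cayleyExpI : conj (cayleyExpI ε ω n) = cayleyExpNegI ε ω n := by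
  rw [cayleyExpI, cayleyExpNegI, map_zpow₀, map_div₀, conj_one_add_I_mul,
    ← conj_one_add_I_mul, conj_conj]

theorem norm_cayleyExpI : ‖cayleyExpI ε ω n‖ = 1 := by
  rw [cayleyExpI, ← conj_one_add_I_mul, norm_zpow, norm_div_conj (one_add_I_mul_ne_zero ε ω),
    one_zpow]

theorem cayleyCos_eq_re : cayleyCos ε ω n = (cayleyExpI ε ω n).re := by
  rw [cayleyCos, ← conj_cayleyExpI, add_conj]; push_cast; ring

theorem cayleySin_eq_im : cayleySin ε ω n = (cayleyExpI ε ω n).im := by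
  rw [cayleySin, ← conj_cayleyExpI, sub_conj]; push_cast; field_simp

theorem cayleyExpI_succ_sub :
    cayleyExpI ε ω (n + 1) - cayleyExpI ε ω n
      = I * ε * ω / 2 * (cayleyExpI ε ω n + cayleyExpI ε ω (n + 1)) := by
  have h₁ := one_add_I_mul_ne_zero ε ω
  have h₂ : 1 - I * ε * ω / 2 ≠ 0 := conj_one_add_I_mul ε ω ▸ (map_ne_zero conj).mpr h₁
  exact one_add_div_one_sub_zpow_succ_sub h₁ h₂ n

theorem re_cayleyExpI_succ_sub :
    (cayleyExpI ε ω (n + 1)).re - (cayleyExpI ε ω n).re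
      = -(ε * ω / 2) * ((cayleyExpI ε ω n).im + (cayleyExpI ε ω (n + 1)).im) := by
  have := congrArg re (cayleyExpI_succ_sub ε ω n)
  simp only [sub_re, mul_re, div_ofNat_re, I_re, ofReal_re, zero_mul, I_im, ofReal_im, mul_zero,
    sub_self, mul_im, one_mul, zero_add, zero_div, add_re, div_ofNat_im, add_im, zero_sub] at this
  linear_combination this

theorem im_cayleyExpI_succ_sub :
    (cayleyExpI ε ω (n + 1)).im - (cayleyExpI ε ω n).im
      = ε * ω / 2 * ((cayleyExpI ε ω n).re + (cayleyExpI ε ω (n + 1)).re) := by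
  have := congrArg im (cayleyExpI_succ_sub ε ω n)
  simp only [sub_im, mul_im, div_ofNat_re, mul_re, I_re, ofReal_re, zero_mul, I_im, ofReal_im,
    mul_zero, sub_self, one_mul, zero_add, zero_div, add_im, div_ofNat_im, add_re] at this
  linear_combination this

end

/-- Reality, the Pythagorean identity Cos² + Sin² = 1, and the
first-order difference relations for Cayley-trigonometric functions on εℤ. -/
theorem stmt11 (ε : ℝ) (hε : 0 < ε) (ω : ℝ) :
    ∀ n : ℤ,
      (cayleyCos ε ω n).im = 0 ∧
      (cayleySin ε ω n).im = 0 ∧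
      cayleyCos ε ω n ^ 2 + cayleySin ε ω n ^ 2 = 1 ∧
      (cayleyCos ε ω (n + 1) - cayleyCos ε ω n) / (ε : ℂ)
        = -(ω : ℂ) * (cayleySin ε ω n + cayleySin ε ω (n + 1)) / 2 ∧
      (cayleySin ε ω (n + 1) - cayleySin ε ω n) / (ε : ℂ)
        = (ω : ℂ) * (cayleyCos ε ω n + cayleyCos ε ω (n + 1)) / 2 := by
  intro n
  have hε' : (ε : ℂ) ≠ 0 := ofReal_ne_zero.mpr hε.ne'
  simp only [cayleyCos_eq_re, cayleySin_eq_im, ofReal_im, true_and]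
  refine ⟨?_, ?_, ?_⟩
  · have h : normSq (cayleyExpI ε ω n) = 1 := by
      rw [normSq_eq_norm_sq, norm_cayleyExpI, one_pow]
    rw [normSq_apply] at h
    exact_mod_cast by linear_combination h
  · rw [div_eq_iff hε']
    exact_mod_cast by linear_combination re_cayleyExpI_succ_sub ε ω n
  · rw [div_eq_iff hε']
    exact_mod_cast by linear_combination im_cayleyExpI_succ_sub ε ω n
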